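/- Let $c_1, c_2 > 0$ with $c_1 \neq c_2$. Then the quartic $P(x) = (4 c_1^3 - 8 c_1^2 c_2 + 4 c_1 c_2^2) x^4 + 8 c_1 c_2 x^2 - c_2$ has exactly one positive real root, namely $x = \frac{\sqrt{c_2}}{\sqrt{c_1}+\sqrt{c_2}} \cdot \frac{1}{\sqrt{2\sqrt{c_1 c_2}}}$. -/
import Mathlib


theorem stmt13 (c1 c2 : ℝ) (hc1 : 0 < c1) (hc2 : 0 < c2) (hne : c1 ≠ c2) :
    ∀ x : ℝ, 0 < x →
      ((4 * c1 ^ 3 - 8 * c1 ^ 2 * c2 + 4 * c1 * c2 ^ 2) * x ^ 4 + 8 * c1 * c2 * x ^ 2 - c2 = 0 ↔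
        x = Real.sqrt c2 / (Real.sqrt c1 + Real.sqrt c2) *
          (1 / Real.sqrt (2 * Real.sqrt (c1 * c2)))) := by
  intro x hx
  set s1 := Real.sqrt c1 with hs1
  set s2 := Real.sqrt c2 with hs2
  have hs1p : 0 < s1 := Real.sqrt_pos.mpr hc1
  have hs2p : 0 < s2 := Real.sqrt_pos.mpr hc2
  have h1 : s1 ^ 2 = c1 := Real.sq_sqrt hc1.le
  have h2 : s2 ^ 2 = c2 := Real.sq_sqrt hc2.le
  have hss : Real.sqrt (c1 * c2) = s1 * s2 := by
    rw [hs1, hs2, ← Real.sqrt_mul hc1.le]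
  set t := Real.sqrt (2 * Real.sqrt (c1 * c2)) with ht
  have hsq : t ^ 2 = 2 * (s1 * s2) := by
    rw [ht, hss]
    rw [show 2 * (s1 * s2) = 2 * s1 * s2 by ring] at *
    exact Real.sq_sqrt (by positivity)
  have htp : 0 < t := Real.sqrt_pos.mpr (by rw [hss]; positivity)
  set r := s2 / (s1 + s2) * (1 / t) with hr
  have hrp : 0 < r := by positivity
  have hne1 : s1 + s2 ≠ 0 := by positivity
  have hr2 : r ^ 2 = s2 ^ 2 / ((s1 + s2) ^ 2 * (2 * (s1 * s2))) := by
    have h : r ^ 2 = s2 ^ 2 / (s1 + s2) ^ 2 * (1 / t ^ 2) := by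
      rw [hr]; field_simp
    rw [h, hsq]; field_simp
  have hfr : (4 * c1 ^ 3 - 8 * c1 ^ 2 * c2 + 4 * c1 * c2 ^ 2) * r ^ 4
      + 8 * c1 * c2 * r ^ 2 - c2 = 0 := by
    have h4 : r ^ 4 = (r ^ 2) ^ 2 := by ring
    rw [h4, hr2, ← h1, ← h2]
    field_simp
    ring
  constructor
  · intro hfx
    have hsub : (x ^ 2 - r ^ 2) * ((4 * c1 * (c1 - c2) ^ 2) * (x ^ 2 + r ^ 2) + 8 * c1 * c2) = 0 := by
      linear_combination hfx - hfr
    have hcc : c1 - c2 ≠ 0 := sub_ne_zero.mpr hne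
    have hA : 0 < 4 * c1 * (c1 - c2) ^ 2 := by positivity
    have hpos : 0 < (4 * c1 * (c1 - c2) ^ 2) * (x ^ 2 + r ^ 2) + 8 * c1 * c2 := by
      have h5 := mul_pos hA (by positivity : (0:ℝ) < x ^ 2 + r ^ 2)
      nlinarith [mul_pos hc1 hc2]
    have hx2 : x ^ 2 = r ^ 2 := by
      rcases mul_eq_zero.mp hsub with h | h
      · linarith
      · linarith
    have hfac : (x - r) * (x + r) = 0 := by linear_combination hx2
    rcases mul_eq_zero.mp hfac with h | h
    · linarith
    · linarith
  · intro h; rw [h]; exact hfr
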